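/- For each x ≥ 0, the first central moment of the Dunkl-Appell Gamma-type operator satisfies Ω_n^1(x) := D_n*((t−x); x) = (μ/n)·(e_μ(−nx)/e_μ(nx))·(A(1)−A(−1))/A(1) + (1/n)·(A'(1)/A(1) + λ + 1); in particular Ω_n^1(x) → 0 as n → ∞, uniformly on compact subsets of [0, ∞). -/

import Mathlib

open scoped BigOperators
open MeasureTheory Filter

/-- Parity indicator: 0 for even, 1 for odd. -/
def theta (j : ℕ) : ℝ := if j % 2 = 1 then 1 else 0

/-- Dunkl coefficients via the recursion. -/
noncomputable def gamRec (μ : ℝ) : ℕ → ℝ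
  | 0 => 1
  | k + 1 => ((k : ℝ) + 1 + 2 * μ * theta (k + 1)) * gamRec μ k

/-- Dunkl exponential. -/
noncomputable def emu (μ : ℝ) (x : ℝ) : ℝ := ∑' k : ℕ, x ^ k / gamRec μ k

/-- Dunkl-Appell polynomials. -/
noncomputable def pk (μ : ℝ) (a : ℕ → ℝ) (k : ℕ) (x : ℝ) : ℝ :=
  ∑ j ∈ Finset.range (k + 1),
    (gamRec μ k / (gamRec μ j * gamRec μ (k - j))) * a (k - j) * x ^ j

/-- The analytic function A. -/
noncomputable def Afun (μ : ℝ) (a : ℕ → ℝ) (t : ℝ) : ℝ := ∑' r : ℕ, a r * t ^ r / gamRec μ r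

/-- Dunkl-Appell Gamma-type (Szász–Durrmeyer) operator. -/
noncomputable def Dop (μ lam : ℝ) (a : ℕ → ℝ) (n : ℕ) (f : ℝ → ℝ) (x : ℝ) : ℝ :=
  (1 / (emu μ (n * x) * Afun μ a 1)) *
    ∑' k : ℕ, (pk μ a k (n * x) / gamRec μ k) *
      ((n : ℝ) ^ ((k : ℝ) + 2 * μ * theta k + lam + 1) /
        Real.Gamma ((k : ℝ) + 2 * μ * theta k + lam + 1)) *
      ∫ t in Set.Ioi (0 : ℝ), Real.exp (-(n : ℝ) * t) * t ^ ((k : ℝ) + 2 * μ * theta k + lam) * f t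

/-- Analyticity (radius of convergence > 1) hypothesis for A. -/
def AnalyticHyp (μ : ℝ) (a : ℕ → ℝ) : Prop :=
  ∃ R > (1 : ℝ), ∀ t : ℝ, |t| < R → Summable (fun r : ℕ => a r * t ^ r / gamRec μ r)

/-- Modulus of continuity on [0,∞). -/
noncomputable def modCont (f : ℝ → ℝ) (δ : ℝ) : ℝ :=
  sSup {d : ℝ | ∃ x y : ℝ, 0 ≤ x ∧ 0 ≤ y ∧ |x - y| ≤ δ ∧ d = |f x - f y|}

/-- sup norm on [0,∞). -/
noncomputable def CBnorm (g : ℝ → ℝ) : ℝ := sSup ((fun x => |g x|) '' Set.Ici 0)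

/-- Dunkl coefficients via the Gamma-function formulas of the paper. -/
noncomputable def gamG (μ : ℝ) (m : ℕ) : ℝ :=
  if m % 2 = 0 then
    2 ^ m * (Nat.factorial (m / 2)) * Real.Gamma ((m / 2 : ℕ) + μ + 1 / 2) / Real.Gamma (μ + 1 / 2)
  else
    2 ^ m * (Nat.factorial ((m - 1) / 2)) * Real.Gamma (((m - 1) / 2 : ℕ) + μ + 3 / 2) / Real.Gamma (μ + 1 / 2)

/-!
Applied to `t ↦ t - x`, the `k`-th Gamma kernel returns its mean minus `x`, namely
`([k]_μ + λ + 1) / n - x` with `[k]_μ = k + 2μθ_k`, so everything reduces to the sums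
`∑ₖ pₖ(y) / γ_μ(k)` and `∑ₖ [k]_μ pₖ(y) / γ_μ(k)` at `y = nx`. Since `pₖ(y) / γ_μ(k)` is the
Cauchy product of `yʲ / γ_μ(j)` and `a_r / γ_μ(r)`, the first sum is `e_μ(y) A(1)`. For the
second, `[j + r]_μ = [j]_μ + [r]_μ - 4μ θ_j θ_r` splits it into three Cauchy products, evaluated by
`∑ [j]_μ yʲ / γ_μ(j) = y e_μ(y)`, `∑ [r]_μ a_r / γ_μ(r) = A'(1) + μ (A(1) - A(-1))` and the
parity identity `∑ θ_j b_j = (∑ b_j - ∑ (-1)ʲ b_j) / 2`. The `x` terms cancel, and the uniform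
bound `O(1/n)` follows from `|e_μ(-y)| ≤ e_μ(y)`.
-/

open Finset

lemma theta_nonneg (j : ℕ) : 0 ≤ theta j := by
  unfold theta; split <;> norm_num

lemma theta_le_one (j : ℕ) : theta j ≤ 1 := by
  unfold theta; split <;> norm_num

lemma theta_eq (j : ℕ) : theta j = (1 - (-1 : ℝ) ^ j) / 2 := by
  unfold theta
  rcases Nat.even_or_odd j with hj | hj
  · simp [hj.neg_one_pow, Nat.even_iff.mp hj]
  · simp [hj.neg_one_pow, Nat.odd_iff.mp hj]

lemma theta_add (j r : ℕ) : theta (j + r) = theta j + theta r - 2 * theta j * theta r := by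
  simp only [theta_eq, pow_add]
  rcases neg_one_pow_eq_or ℝ j with h | h <;> rw [h] <;> ring

/-- The Dunkl number `[k]_μ`. -/
def dunklNum (μ : ℝ) (k : ℕ) : ℝ := k + 2 * μ * theta k

lemma dunklNum_add (μ : ℝ) (j r : ℕ) :
    dunklNum μ (j + r) = dunklNum μ j + dunklNum μ r + -4 * μ * theta j * theta r := by
  simp only [dunklNum, theta_add, Nat.cast_add]
  ring

lemma dunklNum_zero (μ : ℝ) : dunklNum μ 0 = 0 := by
  simp [dunklNum, theta]

lemma le_dunklNum {μ : ℝ} (hμ : 0 ≤ μ) (k : ℕ) : (k : ℝ) ≤ dunklNum μ k := by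
  have := theta_nonneg k
  unfold dunklNum
  nlinarith

lemma abs_dunklNum_le (μ : ℝ) (k : ℕ) : |dunklNum μ k| ≤ k + 2 * |μ| := by
  unfold dunklNum
  calc |(k : ℝ) + 2 * μ * theta k| ≤ |(k : ℝ)| + |2 * μ * theta k| := abs_add_le _ _
    _ ≤ k + 2 * |μ| := by
      rw [Nat.abs_cast, abs_mul, abs_mul, abs_two, abs_of_nonneg (theta_nonneg k)]
      nlinarith [abs_nonneg μ, theta_le_one k]

lemma gamRec_succ (μ : ℝ) (k : ℕ) : gamRec μ (k + 1) = dunklNum μ (k + 1) * gamRec μ k := by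
  simp [gamRec, dunklNum]

lemma factorial_le_gamRec {μ : ℝ} (hμ : 0 ≤ μ) (k : ℕ) : (k.factorial : ℝ) ≤ gamRec μ k := by
  induction k with
  | zero => simp [gamRec]
  | succ k ih =>
    rw [gamRec_succ, Nat.factorial_succ, Nat.cast_mul]
    have hc := le_dunklNum hμ (k + 1)
    exact mul_le_mul hc ih (Nat.cast_nonneg _) ((Nat.cast_nonneg _).trans hc)

lemma gamRec_pos {μ : ℝ} (hμ : 0 ≤ μ) (k : ℕ) : 0 < gamRec μ k :=
  (Nat.cast_pos.mpr k.factorial_pos).trans_le (factorial_le_gamRec hμ k)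

lemma tsum_theta_mul {b : ℕ → ℝ} (hb : Summable fun j => ‖b j‖) :
    ∑' j, theta j * b j = ((∑' j, b j) - ∑' j, (-1 : ℝ) ^ j * b j) / 2 := by
  have hb' : Summable fun j => (-1 : ℝ) ^ j * b j := .of_norm (hb.congr fun j => by simp)
  rw [← hb.of_norm.tsum_sub hb', ← tsum_div_const]
  exact tsum_congr fun j => by rw [theta_eq]; ring

lemma Summable.norm_theta_mul {b : ℕ → ℝ} (hb : Summable fun j => ‖b j‖) :
    Summable fun j => ‖theta j * b j‖ :=
  hb.of_nonneg_of_le (fun _ => norm_nonneg _) fun j => by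
    rw [norm_mul, Real.norm_of_nonneg (theta_nonneg j)]
    exact mul_le_of_le_one_left (norm_nonneg _) (theta_le_one j)

section DunklExponential

variable {μ : ℝ} (hμ : 0 ≤ μ)
include hμ

lemma summable_norm_pow_div_gamRec (y : ℝ) : Summable fun k => ‖y ^ k / gamRec μ k‖ := by
  refine (Real.summable_pow_div_factorial |y|).of_nonneg_of_le (fun _ => norm_nonneg _) fun k => ?_
  rw [norm_div, norm_pow, Real.norm_eq_abs, Real.norm_of_nonneg (gamRec_pos hμ k).le]
  exact div_le_div_of_nonneg_left (by positivity) (by positivity) (factorial_le_gamRec hμ k)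

lemma dunklNum_mul_pow_div_gamRec_succ (y : ℝ) (k : ℕ) :
    dunklNum μ (k + 1) * (y ^ (k + 1) / gamRec μ (k + 1)) = y * (y ^ k / gamRec μ k) := by
  have hc : 0 < dunklNum μ (k + 1) := (Nat.cast_pos.mpr k.succ_pos).trans_le (le_dunklNum hμ _)
  have hg := gamRec_pos hμ k
  rw [gamRec_succ]
  field_simp
  ring

/-- The Dunkl derivative of `t ↦ e_μ(y t)` at `t = 1` is `y e_μ(y)`. -/
lemma hasSum_dunklNum_mul_pow_div_gamRec (y : ℝ) :
    HasSum (fun k => dunklNum μ k * (y ^ k / gamRec μ k)) (y * emu μ y) := by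
  rw [← hasSum_nat_add_iff' 1]
  simpa [dunklNum_zero, dunklNum_mul_pow_div_gamRec_succ hμ, emu] using
    (summable_norm_pow_div_gamRec hμ y).of_norm.hasSum.mul_left y

lemma summable_norm_dunklNum_mul_pow_div_gamRec (y : ℝ) :
    Summable fun k => ‖dunklNum μ k * (y ^ k / gamRec μ k)‖ := by
  rw [← summable_nat_add_iff 1]
  simpa [dunklNum_mul_pow_div_gamRec_succ hμ, norm_mul] using
    (summable_norm_pow_div_gamRec hμ y).mul_left ‖y‖

lemma tsum_theta_mul_pow_div_gamRec (y : ℝ) :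
    ∑' k, theta k * (y ^ k / gamRec μ k) = (emu μ y - emu μ (-y)) / 2 := by
  rw [tsum_theta_mul (summable_norm_pow_div_gamRec hμ y)]
  simp only [emu, neg_pow y, mul_div_assoc]

lemma one_le_emu {y : ℝ} (hy : 0 ≤ y) : 1 ≤ emu μ y := by
  simpa [gamRec, emu] using (summable_norm_pow_div_gamRec hμ y).of_norm.le_tsum 0 fun k _ => by
    have := gamRec_pos hμ k
    positivity

lemma emu_pos {y : ℝ} (hy : 0 ≤ y) : 0 < emu μ y :=
  zero_lt_one.trans_le (one_le_emu hμ hy)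

lemma abs_emu_neg_le {y : ℝ} (hy : 0 ≤ y) : |emu μ (-y)| ≤ emu μ y := by
  refine (norm_tsum_le_tsum_norm (summable_norm_pow_div_gamRec hμ (-y))).trans_eq
    (tsum_congr fun k => ?_)
  rw [norm_div, norm_pow, norm_neg, Real.norm_of_nonneg hy,
    Real.norm_of_nonneg (gamRec_pos hμ k).le]

end DunklExponential

section PowerSeries

variable {b : ℕ → ℝ} {R x : ℝ}

lemma summable_norm_pow_mul_mul_pow_of_abs_lt (hb : Summable fun r => b r * R ^ r)
    (hx : |x| < R) (k : ℕ) : Summable fun r : ℕ => ‖(r : ℝ) ^ k * b r * x ^ r‖ := by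
  have hR : 0 < R := (abs_nonneg x).trans_lt hx
  obtain ⟨C, hC⟩ := hb.tendsto_atTop_zero.norm.bddAbove_range
  have hq : ‖|x| / R‖ < 1 := by
    rwa [Real.norm_of_nonneg (by positivity), div_lt_one hR]
  refine ((summable_norm_pow_mul_geometric_of_norm_lt_one k hq).mul_left C).of_nonneg_of_le
    (fun _ => norm_nonneg _) fun r => ?_
  calc ‖(r : ℝ) ^ k * b r * x ^ r‖ = ‖b r * R ^ r‖ * ‖(r : ℝ) ^ k * (|x| / R) ^ r‖ := by
        simp only [norm_mul, norm_pow, Real.norm_eq_abs, abs_div, abs_abs, abs_of_pos hR, div_pow,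
          abs_pow]
        field_simp
    _ ≤ C * ‖(r : ℝ) ^ k * (|x| / R) ^ r‖ :=
        mul_le_mul_of_nonneg_right (hC ⟨r, rfl⟩) (norm_nonneg _)

lemma hasDerivAt_tsum_mul_pow (hb : Summable fun r => b r * R ^ r) (hx : |x| < R) :
    HasDerivAt (fun y => ∑' r, b r * y ^ r) (∑' r : ℕ, (r : ℝ) * b r * x ^ (r - 1)) x := by
  obtain ⟨ρ, hxρ, hρR⟩ := exists_between hx
  have hρ : 0 < ρ := (abs_nonneg x).trans_lt hxρ
  have hbound : ∀ r, ∀ y ∈ Set.Ioo (-ρ) ρ,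
      ‖r * b r * y ^ (r - 1)‖ ≤ ‖(r : ℝ) ^ 1 * b r * ρ ^ r‖ / ρ := by
    rintro (_ | r) y hy
    · simp
    have hyρ : |y| ≤ ρ := abs_le.mpr ⟨hy.1.le, hy.2.le⟩
    rw [le_div_iff₀ hρ, pow_one, pow_succ, ← mul_assoc, norm_mul _ ρ, Real.norm_of_nonneg hρ.le,
      Nat.add_sub_cancel, norm_mul _ (y ^ r), norm_mul _ (ρ ^ r), norm_pow, norm_pow,
      Real.norm_of_nonneg hρ.le]
    gcongr
    exact hyρ
  have hxρ' : x ∈ Set.Ioo (-ρ) ρ := abs_lt.mp hxρ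
  have hsum := summable_norm_pow_mul_mul_pow_of_abs_lt hb ((abs_of_pos hρ).trans_lt hρR)
  refine hasDerivAt_tsum_of_isPreconnected ((hsum 1).div_const ρ) isOpen_Ioo isPreconnected_Ioo
    (fun r y _ => ?_) hbound hxρ' ?_ hxρ'
  · simpa [mul_comm, mul_left_comm, mul_assoc] using (hasDerivAt_pow r y).const_mul (b r)
  · simpa using (summable_norm_pow_mul_mul_pow_of_abs_lt hb hx 0).of_norm

end PowerSeries

lemma Afun_eq_tsum (μ : ℝ) (a : ℕ → ℝ) (t : ℝ) : Afun μ a t = ∑' r, a r / gamRec μ r * t ^ r :=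
  tsum_congr fun r => by ring

lemma Afun_one (μ : ℝ) (a : ℕ → ℝ) : Afun μ a 1 = ∑' r, a r / gamRec μ r := by
  simp [Afun_eq_tsum]

namespace AnalyticHyp

variable {μ : ℝ} {a : ℕ → ℝ} (hA : AnalyticHyp μ a)
include hA

lemma exists_summable_mul_pow : ∃ R > 1, Summable fun r => a r / gamRec μ r * R ^ r := by
  obtain ⟨R, hR, hsum⟩ := hA
  refine ⟨(1 + R) / 2, by linarith, (hsum ((1 + R) / 2) ?_).congr fun r => ?_⟩
  · rw [abs_of_pos (by linarith)]; linarith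
  · ring

lemma summable_norm_pow_mul (k : ℕ) : Summable fun r : ℕ => ‖(r : ℝ) ^ k * (a r / gamRec μ r)‖ := by
  obtain ⟨R, hR, hsum⟩ := hA.exists_summable_mul_pow
  simpa [mul_assoc] using summable_norm_pow_mul_mul_pow_of_abs_lt hsum (x := 1) (by simpa) k

lemma hasDerivAt_Afun_one : HasDerivAt (Afun μ a) (∑' r : ℕ, (r : ℝ) * (a r / gamRec μ r)) 1 := by
  obtain ⟨R, hR, hsum⟩ := hA.exists_summable_mul_pow
  have := hasDerivAt_tsum_mul_pow hsum (x := 1) (by simpa)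
  simp only [one_pow, mul_one] at this
  exact funext (Afun_eq_tsum μ a) ▸ this

lemma summable_norm_coeff : Summable fun r => ‖a r / gamRec μ r‖ := by
  simpa using hA.summable_norm_pow_mul 0

lemma tsum_theta_mul_coeff :
    ∑' r, theta r * (a r / gamRec μ r) = (Afun μ a 1 - Afun μ a (-1)) / 2 := by
  rw [tsum_theta_mul hA.summable_norm_coeff, Afun_one, Afun_eq_tsum μ a (-1)]
  simp only [mul_comm]

lemma summable_norm_dunklNum_mul_coeff :
    Summable fun r => ‖dunklNum μ r * (a r / gamRec μ r)‖ := by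
  refine ((hA.summable_norm_pow_mul 1).add (hA.summable_norm_coeff.mul_left (2 * |μ|)))
    |>.of_nonneg_of_le (fun _ => norm_nonneg _) fun r => ?_
  rw [norm_mul, norm_mul, pow_one, Real.norm_eq_abs (dunklNum μ r), Real.norm_natCast, ← add_mul]
  exact mul_le_mul_of_nonneg_right (abs_dunklNum_le μ r) (norm_nonneg _)

lemma hasSum_dunklNum_mul_coeff : HasSum (fun r => dunklNum μ r * (a r / gamRec μ r))
    (deriv (Afun μ a) 1 + μ * (Afun μ a 1 - Afun μ a (-1))) := by
  have hr : HasSum (fun r : ℕ => (r : ℝ) * (a r / gamRec μ r)) (deriv (Afun μ a) 1) := by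
    rw [hA.hasDerivAt_Afun_one.deriv]
    simpa using (hA.summable_norm_pow_mul 1).of_norm.hasSum
  have hθ := hA.summable_norm_coeff.norm_theta_mul.of_norm.hasSum
  rw [hA.tsum_theta_mul_coeff] at hθ
  convert hr.add (hθ.mul_left (2 * μ)) using 1
  · funext r
    unfold dunklNum
    ring
  · ring

end AnalyticHyp

section CauchyProduct

variable {R : Type*} [NormedCommRing R] [CompleteSpace R] {f g : ℕ → R}

lemma hasSum_sum_antidiagonal_of_summable_norm (hf : Summable fun n => ‖f n‖)
    (hg : Summable fun n => ‖g n‖) :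
    HasSum (fun n => ∑ kl ∈ antidiagonal n, f kl.1 * g kl.2) ((∑' n, f n) * ∑' n, g n) := by
  rw [tsum_mul_tsum_eq_tsum_sum_antidiagonal_of_summable_norm hf hg]
  exact (summable_norm_sum_mul_antidiagonal_of_summable_norm hf hg).of_norm.hasSum

lemma hasSum_mul_sum_antidiagonal_of_add {w u : ℕ → R} {κ : R}
    (hw : ∀ j r, w (j + r) = w j + w r + κ * u j * u r)
    (hf : Summable fun n => ‖f n‖) (hg : Summable fun n => ‖g n‖)
    (hwf : Summable fun n => ‖w n * f n‖) (hwg : Summable fun n => ‖w n * g n‖)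
    (huf : Summable fun n => ‖u n * f n‖) (hug : Summable fun n => ‖u n * g n‖) :
    HasSum (fun n => w n * ∑ kl ∈ antidiagonal n, f kl.1 * g kl.2)
      ((∑' n, w n * f n) * (∑' n, g n) + (∑' n, f n) * (∑' n, w n * g n) +
        κ * ((∑' n, u n * f n) * ∑' n, u n * g n)) := by
  convert ((hasSum_sum_antidiagonal_of_summable_norm hwf hg).add
    (hasSum_sum_antidiagonal_of_summable_norm hf hwg)).add
    ((hasSum_sum_antidiagonal_of_summable_norm huf hug).mul_left κ) using 1
  funext n
  simp only [mul_sum, ← sum_add_distrib]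
  refine sum_congr rfl fun kl hkl => ?_
  rw [← mem_antidiagonal.mp hkl, hw]
  ring

end CauchyProduct

section DunklAppell

variable {μ : ℝ} (hμ : 0 ≤ μ) {a : ℕ → ℝ}
include hμ

lemma pk_div_gamRec (k : ℕ) (y : ℝ) :
    pk μ a k y / gamRec μ k =
      ∑ kl ∈ antidiagonal k, y ^ kl.1 / gamRec μ kl.1 * (a kl.2 / gamRec μ kl.2) := by
  rw [Nat.sum_antidiagonal_eq_sum_range_succ (fun j r => y ^ j / gamRec μ j * (a r / gamRec μ r)),
    pk, sum_div]
  refine sum_congr rfl fun j _ => ?_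
  have := (gamRec_pos hμ k).ne'
  have := (gamRec_pos hμ j).ne'
  have := (gamRec_pos hμ (k - j)).ne'
  field_simp

variable (hA : AnalyticHyp μ a)
include hA

lemma hasSum_pk_div_gamRec (y : ℝ) :
    HasSum (fun k => pk μ a k y / gamRec μ k) (emu μ y * Afun μ a 1) := by
  simp only [pk_div_gamRec hμ, Afun_one]
  exact hasSum_sum_antidiagonal_of_summable_norm (f := fun j => y ^ j / gamRec μ j)
    (g := fun r => a r / gamRec μ r) (summable_norm_pow_div_gamRec hμ y)
    hA.summable_norm_coeff

lemma hasSum_dunklNum_mul_pk_div_gamRec (y : ℝ) :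
    HasSum (fun k => dunklNum μ k * (pk μ a k y / gamRec μ k))
      (y * emu μ y * Afun μ a 1 + emu μ y * deriv (Afun μ a) 1 +
        μ * emu μ (-y) * (Afun μ a 1 - Afun μ a (-1))) := by
  have hE := summable_norm_pow_div_gamRec hμ y
  have hB := hA.summable_norm_coeff
  simp only [pk_div_gamRec hμ]
  have key := hasSum_mul_sum_antidiagonal_of_add (dunklNum_add μ) hE hB
    (summable_norm_dunklNum_mul_pow_div_gamRec hμ y) hA.summable_norm_dunklNum_mul_coeff
    hE.norm_theta_mul hB.norm_theta_mul
  rw [(hasSum_dunklNum_mul_pow_div_gamRec hμ y).tsum_eq, hA.hasSum_dunklNum_mul_coeff.tsum_eq,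
    tsum_theta_mul_pow_div_gamRec hμ, hA.tsum_theta_mul_coeff, ← Afun_one, ← emu.eq_1] at key
  convert key using 1
  · rfl
  · ring

end DunklAppell

lemma gammaKernel_integral_sub {n s : ℝ} (hn : 0 < n) (hs : -1 < s) (x : ℝ) :
    n ^ (s + 1) / Real.Gamma (s + 1) *
        ∫ t in Set.Ioi (0 : ℝ), Real.exp (-n * t) * t ^ s * (t - x) =
      (s + 1) / n - x := by
  have moment : ∀ p : ℝ, -1 < p →
      ∫ t in Set.Ioi (0 : ℝ), t ^ p * Real.exp (-(n * t)) = (n ^ (p + 1))⁻¹ * Real.Gamma (p + 1) := by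
    intro p hp
    simpa [Real.inv_rpow hn.le] using
      Real.integral_rpow_mul_exp_neg_mul_Ioi (a := p + 1) (by linarith) hn
  have integrable : ∀ p : ℝ, -1 < p →
      MeasureTheory.IntegrableOn (fun t : ℝ => t ^ p * Real.exp (-(n * t))) (Set.Ioi 0) := by
    intro p hp
    simpa [Real.rpow_one, mul_comm] using
      integrableOn_rpow_mul_exp_neg_mul_rpow hp zero_lt_one hn
  have hsplit : ∀ t ∈ Set.Ioi (0 : ℝ), Real.exp (-n * t) * t ^ s * (t - x) =
      t ^ (s + 1) * Real.exp (-(n * t)) - x * (t ^ s * Real.exp (-(n * t))) := by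
    intro t ht
    rw [Real.rpow_add_one ht.ne', neg_mul]
    ring
  have hΓ : Real.Gamma (s + 1 + 1) = (s + 1) * Real.Gamma (s + 1) :=
    Real.Gamma_add_one (by linarith)
  have hΓpos := Real.Gamma_pos_of_pos (show 0 < s + 1 by linarith)
  rw [setIntegral_congr_fun measurableSet_Ioi hsplit,
    integral_sub (integrable _ (by linarith)) ((integrable s hs).const_mul x),
    integral_const_mul, moment _ (by linarith), moment s hs, hΓ, Real.rpow_add_one hn.ne' (s + 1)]
  field_simp

section Moment

variable {μ lam : ℝ} (hμ : 0 ≤ μ) (hlam : 0 ≤ lam) {a : ℕ → ℝ} (hA : AnalyticHyp μ a)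
  (hA1 : Afun μ a 1 ≠ 0)
include hμ hlam hA hA1

lemma Dop_sub_eq {n : ℕ} (hn : 0 < n) {x : ℝ} (hx : 0 ≤ x) :
    Dop μ lam a n (fun t => t - x) x =
      (μ / n) * (emu μ (-(n * x)) / emu μ (n * x)) *
          ((Afun μ a 1 - Afun μ a (-1)) / Afun μ a 1) +
        (1 / n) * (deriv (Afun μ a) 1 / Afun μ a 1 + lam + 1) := by
  have hn' : (0 : ℝ) < n := Nat.cast_pos.mpr hn
  have he : emu μ (n * x) ≠ 0 := (emu_pos hμ (by positivity)).ne'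
  have hterm : ∀ k : ℕ,
      pk μ a k (n * x) / gamRec μ k *
          ((n : ℝ) ^ ((k : ℝ) + 2 * μ * theta k + lam + 1) /
            Real.Gamma ((k : ℝ) + 2 * μ * theta k + lam + 1)) *
          ∫ t in Set.Ioi (0 : ℝ), Real.exp (-(n : ℝ) * t) *
            t ^ ((k : ℝ) + 2 * μ * theta k + lam) * (t - x) =
        1 / n * (dunklNum μ k * (pk μ a k (n * x) / gamRec μ k)) +
          ((lam + 1) / n - x) * (pk μ a k (n * x) / gamRec μ k) := by
    intro k
    have hk := (Nat.cast_nonneg k).trans (le_dunklNum hμ k)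
    have hs : -1 < (k : ℝ) + 2 * μ * theta k + lam := by
      unfold dunklNum at hk
      linarith
    rw [mul_assoc, gammaKernel_integral_sub hn' hs, dunklNum]
    ring
  have hsum := ((hasSum_dunklNum_mul_pk_div_gamRec hμ hA (n * x)).mul_left (1 / (n : ℝ))).add
    ((hasSum_pk_div_gamRec hμ hA (n * x)).mul_left ((lam + 1) / n - x))
  rw [Dop, tsum_congr hterm, hsum.tsum_eq]
  field_simp
  ring

lemma abs_Dop_sub_le {n : ℕ} (hn : 0 < n) {x : ℝ} (hx : 0 ≤ x) :
    |Dop μ lam a n (fun t => t - x) x| ≤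
      (μ * |(Afun μ a 1 - Afun μ a (-1)) / Afun μ a 1| +
        |deriv (Afun μ a) 1 / Afun μ a 1 + lam + 1|) * (1 / n) := by
  have hy : (0 : ℝ) ≤ n * x := mul_nonneg n.cast_nonneg hx
  have hratio : |emu μ (-(n * x)) / emu μ (n * x)| ≤ 1 := by
    have he := emu_pos hμ hy
    rw [abs_div, abs_of_pos he]
    exact div_le_one_of_le₀ (abs_emu_neg_le hμ hy) he.le
  rw [Dop_sub_eq hμ hlam hA hA1 hn hx]
  refine (abs_add_le _ _).trans ?_
  rw [abs_mul, abs_mul, abs_mul, abs_of_nonneg (by positivity : 0 ≤ μ / n),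
    abs_of_nonneg (by positivity : (0 : ℝ) ≤ 1 / n)]
  calc _ ≤ μ / n * 1 * |(Afun μ a 1 - Afun μ a (-1)) / Afun μ a 1| +
        1 / n * |deriv (Afun μ a) 1 / Afun μ a 1 + lam + 1| := by gcongr
    _ = _ := by ring

lemma tendstoUniformlyOn_Dop_sub :
    TendstoUniformlyOn (fun (n : ℕ) (x : ℝ) => Dop μ lam a n (fun t => t - x) x) 0 atTop
      (Set.Ici 0) := by
  rw [Metric.tendstoUniformlyOn_iff]
  intro ε hε
  have hlim := tendsto_one_div_atTop_nhds_zero_nat.const_mul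
    (μ * |(Afun μ a 1 - Afun μ a (-1)) / Afun μ a 1| +
      |deriv (Afun μ a) 1 / Afun μ a 1 + lam + 1|)
  rw [mul_zero] at hlim
  filter_upwards [hlim.eventually (gt_mem_nhds hε), eventually_gt_atTop 0] with n hlt hn x hx
  rw [Pi.zero_apply, dist_zero_left, Real.norm_eq_abs]
  exact (abs_Dop_sub_le hμ hlam hA hA1 hn hx).trans_lt hlt

end Moment

theorem Dop_first_central_moment_general (μ lam : ℝ) (hμ : 0 ≤ μ) (hlam : 0 ≤ lam)
    (a : ℕ → ℝ) (hA : AnalyticHyp μ a) (hA1 : Afun μ a 1 ≠ 0) :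
    (∀ n : ℕ, 1 ≤ n → ∀ x : ℝ, 0 ≤ x →
      Dop μ lam a n (fun t => t - x) x =
        (μ / n) * (emu μ (-(n * x)) / emu μ (n * x)) *
            ((Afun μ a 1 - Afun μ a (-1)) / Afun μ a 1) +
          (1 / n) * (deriv (Afun μ a) 1 / Afun μ a 1 + lam + 1)) ∧
    (∀ K : Set ℝ, K ⊆ Set.Ici 0 → IsCompact K →
      TendstoUniformlyOn (fun (n : ℕ) (x : ℝ) => Dop μ lam a n (fun t => t - x) x) 0
        atTop K) :=
  ⟨fun _ hn _ hx => Dop_sub_eq hμ hlam hA hA1 hn hx,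
    fun _ hK _ => (tendstoUniformlyOn_Dop_sub hμ hlam hA hA1).mono hK⟩

theorem Dop_first_central_moment (μ lam : ℝ) (hμ : 0 ≤ μ) (hlam : 0 ≤ lam)
    (a : ℕ → ℝ) (ha0 : a 0 ≠ 0) (hA : AnalyticHyp μ a) (hA1 : Afun μ a 1 ≠ 0)
    (hpos : ∀ r : ℕ, 0 ≤ a r / Afun μ a 1) :
    (∀ n : ℕ, 1 ≤ n → ∀ x : ℝ, 0 ≤ x →
      Dop μ lam a n (fun t => t - x) x =
        (μ / n) * (emu μ (-(n * x)) / emu μ (n * x)) *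
            ((Afun μ a 1 - Afun μ a (-1)) / Afun μ a 1) +
          (1 / n) * (deriv (Afun μ a) 1 / Afun μ a 1 + lam + 1)) ∧
    (∀ K : Set ℝ, K ⊆ Set.Ici 0 → IsCompact K →
      TendstoUniformlyOn (fun (n : ℕ) (x : ℝ) => Dop μ lam a n (fun t => t - x) x) 0
        atTop K) :=
  Dop_first_central_moment_general μ lam hμ hlam a hA hA1
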